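/- Let w be any string, c a position with ρ_w(c) ≥ 1, and r an integer with 1 ≤ r ≤ ρ_w(c). If ρ_w(c+r) = ρ_w(c−r), then ρ_w(c) ≥ r + ρ_w(c+r); if ρ_w(c+r) ≠ ρ_w(c−r), then ρ_w(c) = r + min(ρ_w(c+r), ρ_w(c−r)). -/
import Mathlib


/-!
Common definitions: strings as `List α` over an alphabet `α`, 1-based positions.
-/

variable {α : Type*}

/-- The substring `w[i:j]` (1-based, inclusive; empty when `j < i`). -/
def seg (w : List α) (i j : ℕ) : List α := (w.take j).drop (i - 1)

/-- `w` has an even palindrome of radius `r` centered at position `c`: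
`r ≤ c`, `c + r ≤ |w|` and `w[c−k+1] = w[c+k]` for all `1 ≤ k ≤ r`
(here expressed with 0-based list indexing: `w[c−k]? = w[c+k−1]?`). -/
def PalAt (w : List α) (c r : ℕ) : Prop :=
  r ≤ c ∧ c + r ≤ w.length ∧ ∀ k, 1 ≤ k → k ≤ r → w[c - k]? = w[c + k - 1]?

/-- `ρ_w(c)`: the maximal even-palindrome radius at center `c`. -/
noncomputable def rho (w : List α) (c : ℕ) : ℕ := sSup {r | PalAt w c r}

/-- The reduction relation: `x y yᴿ y z → x y z` for nonempty `y`. -/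
def Reduces (w w' : List α) : Prop :=
  ∃ x y z : List α, y ≠ [] ∧ w = x ++ y ++ y.reverse ++ y ++ z ∧ w' = x ++ y ++ z

/-- A string is irreducible if no reduction applies to it. -/
def ZIrreducible (w : List α) : Prop := ∀ w', ¬ Reduces w w'

def ZReducible (w : List α) : Prop := ∃ w', Reduces w w'

/-- `w` is pp-irreducible if its longest proper prefix `w[1:|w|−1]` is irreducible. -/
def PPIrreducible (w : List α) : Prop := ZIrreducible w.dropLast

/-- `w` is ss-reducible if it is reducible and pp-irreducible. -/
def SSReducible (w : List α) : Prop := ZReducible w ∧ PPIrreducible w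

/-- A Z-shape occurrence `⟨p1, p2⟩` in `w`: with `s = p2 − p1 ≥ 1`, `p1 − s ≥ 0`,
`p2 + s ≤ |w|` and `w[p1−s+1 : p2+s] = x xᴿ x` where `x = w[p1−s+1 : p1]`. -/
def ZOcc (w : List α) (p1 p2 : ℕ) : Prop :=
  p1 < p2 ∧ p2 - p1 ≤ p1 ∧ p2 + (p2 - p1) ≤ w.length ∧
    seg w (p1 - (p2 - p1) + 1) (p2 + (p2 - p1)) =
      seg w (p1 - (p2 - p1) + 1) p1 ++ (seg w (p1 - (p2 - p1) + 1) p1).reverse ++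
        seg w (p1 - (p2 - p1) + 1) p1

/-- `c ⊏_w d` : `c ≤ d − ρ_w(d) ≤ d ≤ c + ρ_w(c) ≤ d + ρ_w(d)` with `c ≠ d`
(written without truncated subtraction). -/
def Sqsub (w : List α) (c d : ℕ) : Prop :=
  c < d ∧ c + rho w d ≤ d ∧ d ≤ c + rho w c ∧ c + rho w c ≤ d + rho w d

/-- `𝓕_w(c)`: the maximum frontier over all palindrome chains from `c`
(a palindrome chain is a nonempty list starting at `c` whose consecutive
elements are related by `⊏_w`; its frontier is `e + ρ_w(e)` for its last element `e`). -/
noncomputable def maxFrontier (w : List α) (c : ℕ) : ℕ :=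
  sSup {f | ∃ l : List ℕ, l.head? = some c ∧ l.Chain' (Sqsub w) ∧
      ∃ e, l.getLast? = some e ∧ f = e + rho w e}

/-- `𝓐_w(d)`: the smallest position `c` with `c ≤ d ≤ 𝓕_w(c)`. -/
noncomputable def originator (w : List α) (d : ℕ) : ℕ :=
  sInf {c | 1 ≤ c ∧ c ≤ d ∧ d ≤ maxFrontier w c}

/-- A position `c` of a pp-irreducible string `w` is stable if `𝓕_w(c) < |w|`. -/
def Stable (w : List α) (c : ℕ) : Prop := maxFrontier w c < w.length

/-- `c` is strongly stable if every position in `[1:c]` is stable. -/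
def StronglyStable (w : List α) (c : ℕ) : Prop := ∀ e, 1 ≤ e → e ≤ c → Stable w e

/-- `T` is the output of an end-to-end walk on the path graph labeled `u`:
there are vertices `p 0 = 0, …, p |T| = |u|`, each `≤ |u|`, consecutive ones
adjacent, and `T[i] = u[max (p (i−1)) (p i)]` (1-based; here 0-based indexing). -/
def EndToEndWalkOutput (u T : List α) : Prop :=
  ∃ p : ℕ → ℕ, p 0 = 0 ∧ p T.length = u.length ∧
    (∀ i, i ≤ T.length → p i ≤ u.length) ∧
    (∀ i, i < T.length → p (i + 1) = p i + 1 ∨ p i = p (i + 1) + 1) ∧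
    (∀ i, i < T.length → T[i]? = u[max (p i) (p (i + 1)) - 1]?)

/-- `P` is accurate enough between `a` and `b`:
`min (P e) (b − e) = min (ρ_w e) (b − e)` for all `e ∈ [a:b]`. -/
def AccEnough (w : List α) (P : ℕ → ℕ) (a b : ℕ) : Prop :=
  ∀ e, a ≤ e → e ≤ b → min (P e) (b - e) = min (rho w e) (b - e)

open Classical in
/-- `ν_w(c)`: the largest `e` with `e ⊏_w c`, or `1` if there is none. -/
noncomputable def nu (w : List α) (c : ℕ) : ℕ :=
  if ∃ e, Sqsub w e c then sSup {e | Sqsub w e c} else 1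

/-- `c` is left-good w.r.t. `P` if `P` is accurate enough between `ν_w(c)` and `c`. -/
def LeftGood (w : List α) (P : ℕ → ℕ) (c : ℕ) : Prop := AccEnough w P (nu w c) c

/-- `c` is right-good w.r.t. `P` if `P` is accurate enough between `c` and `c + ρ_w(c)`. -/
def RightGood (w : List α) (P : ℕ → ℕ) (c : ℕ) : Prop := AccEnough w P c (c + rho w c)

section Aux

lemma palAt_mono {w : List α} {c R t : ℕ} (h : PalAt w c R) (ht : t ≤ R) : PalAt w c t :=
  ⟨ht.trans h.1, by have := h.2.1; omega, fun k hk1 hk2 => h.2.2 k hk1 (hk2.trans ht)⟩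

lemma bddAbove_pal (w : List α) (c : ℕ) : BddAbove {r | PalAt w c r} :=
  ⟨c, fun _ hr => hr.1⟩

lemma le_rho {w : List α} {c R : ℕ} (h : PalAt w c R) : R ≤ rho w c :=
  le_csSup (bddAbove_pal w c) h

lemma palAt_zero {w : List α} {c : ℕ} (h : c ≤ w.length) : PalAt w c 0 :=
  ⟨Nat.zero_le _, by simpa using h, fun k hk1 hk2 => ((by omega : False)).elim⟩

lemma palAt_rho {w : List α} {c : ℕ} (h : c ≤ w.length) : PalAt w c (rho w c) := by
  have hne : {r | PalAt w c r}.Nonempty := ⟨0, palAt_zero h⟩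
  exact Nat.sSup_mem hne (bddAbove_pal w c)

/-- The key "cross" identity inside a palindrome of radius `R` at `c`. -/
lemma cross {w : List α} {c R r : ℕ} (hR : PalAt w c R) (hr1 : 1 ≤ r) (hrR : r ≤ R)
    (k : ℕ) (hk1 : 1 ≤ k) (hk2 : k ≤ R + r) :
    w[c - r + k - 1]? = w[c + r - k]? := by
  obtain ⟨hc, hlen, hpal⟩ := hR
  rcases le_or_gt k r with h | h
  · have hx := hpal (r - k + 1) (by omega) (by omega)
    have e1 : c - (r - k + 1) = c - r + k - 1 := by omega
    have e2 : c + (r - k + 1) - 1 = c + r - k := by omega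
    rw [e1, e2] at hx; exact hx
  · have hx := hpal (k - r) (by omega) (by omega)
    have e1 : c - (k - r) = c + r - k := by omega
    have e2 : c + (k - r) - 1 = c - r + k - 1 := by omega
    rw [e1, e2] at hx; exact hx.symm

lemma reflect_left {w : List α} {c R r A : ℕ} (hR : PalAt w c R) (hr1 : 1 ≤ r)
    (hrR : r ≤ R) (hA : PalAt w (c + r) A) : PalAt w (c - r) (min A (R - r)) := by
  obtain ⟨hc, hlen, hpal⟩ := hR
  refine ⟨by omega, by omega, fun k hk1 hk2 => ?_⟩
  have hkA : k ≤ A := le_trans hk2 (min_le_left _ _)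
  have hkR : k ≤ R - r := le_trans hk2 (min_le_right _ _)
  have h1 : w[c - r - k]? = w[c + r + k - 1]? := by
    have hx := hpal (r + k) (by omega) (by omega)
    have e1 : c - (r + k) = c - r - k := by omega
    have e2 : c + (r + k) - 1 = c + r + k - 1 := by omega
    rw [e1, e2] at hx; exact hx
  have h2 : w[c + r - k]? = w[c + r + k - 1]? := hA.2.2 k hk1 hkA
  have h3 := cross ⟨hc, hlen, hpal⟩ hr1 hrR k hk1 (by omega)
  calc w[c - r - k]? = w[c + r + k - 1]? := h1
    _ = w[c + r - k]? := h2.symm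
    _ = w[c - r + k - 1]? := h3.symm

lemma reflect_right {w : List α} {c R r B : ℕ} (hR : PalAt w c R) (hr1 : 1 ≤ r)
    (hrR : r ≤ R) (hB : PalAt w (c - r) B) : PalAt w (c + r) (min B (R - r)) := by
  obtain ⟨hc, hlen, hpal⟩ := hR
  refine ⟨by omega, by omega, fun k hk1 hk2 => ?_⟩
  have hkB : k ≤ B := le_trans hk2 (min_le_left _ _)
  have hkR : k ≤ R - r := le_trans hk2 (min_le_right _ _)
  have h1 : w[c - r - k]? = w[c + r + k - 1]? := by
    have hx := hpal (r + k) (by omega) (by omega)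
    have e1 : c - (r + k) = c - r - k := by omega
    have e2 : c + (r + k) - 1 = c + r + k - 1 := by omega
    rw [e1, e2] at hx; exact hx
  have h2 : w[c - r - k]? = w[c - r + k - 1]? := hB.2.2 k hk1 hkB
  have h3 := cross ⟨hc, hlen, hpal⟩ hr1 hrR k hk1 (by omega)
  calc w[c + r - k]? = w[c - r + k - 1]? := h3.symm
    _ = w[c - r - k]? := h2.symm
    _ = w[c + r + k - 1]? := h1

/-- Extension: palindromes of radius `R+1-r` at both `c-r` and `c+r` inside a
palindrome of radius `R` at `c` extend it to radius `R+1`. -/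
lemma palAt_succ {w : List α} {c R r : ℕ} (hR : PalAt w c R) (hr1 : 1 ≤ r)
    (hrR : r ≤ R) (hA : PalAt w (c + r) (R + 1 - r)) (hB : PalAt w (c - r) (R + 1 - r)) :
    PalAt w c (R + 1) := by
  have hc := hR.1
  have hBc := hB.1
  have hAlen := hA.2.1
  refine ⟨by omega, by omega, fun k hk1 hk2 => ?_⟩
  rcases le_or_gt k R with h | h
  · exact hR.2.2 k hk1 h
  · have hk : k = R + 1 := by omega
    subst hk
    have h1 : w[c - (R + 1)]? = w[c - r + (R + 1 - r) - 1]? := by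
      have hx := hB.2.2 (R + 1 - r) (by omega) le_rfl
      have e1 : c - r - (R + 1 - r) = c - (R + 1) := by omega
      rw [e1] at hx; exact hx
    have h2 := cross hR hr1 hrR (R + 1 - r) (by omega) (by omega)
    have h3 : w[c + r - (R + 1 - r)]? = w[c + (R + 1) - 1]? := by
      have hx := hA.2.2 (R + 1 - r) (by omega) le_rfl
      have e1 : c + r - (R + 1 - r) = c + r - (R + 1 - r) := rfl
      have e2 : c + r + (R + 1 - r) - 1 = c + (R + 1) - 1 := by omega
      rw [e2] at hx; exact hx
    calc w[c - (R + 1)]? = w[c - r + (R + 1 - r) - 1]? := h1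
      _ = w[c + r - (R + 1 - r)]? := h2
      _ = w[c + (R + 1) - 1]? := h3

end Aux

/-- Manacher: for `1 ≤ r ≤ ρ_w(c)`: if `ρ_w(c+r) = ρ_w(c−r)` then
`ρ_w(c) ≥ r + ρ_w(c+r)`; otherwise `ρ_w(c) = r + min(ρ_w(c+r), ρ_w(c−r))`. -/
theorem rho_mirror (w : List α) (c r : ℕ) (h1 : 1 ≤ r) (h2 : r ≤ rho w c) :
    (rho w (c + r) = rho w (c - r) → r + rho w (c + r) ≤ rho w c) ∧
      (rho w (c + r) ≠ rho w (c - r) →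
        rho w c = r + min (rho w (c + r)) (rho w (c - r))) := by
  set R := rho w c with hRdef
  have hRpos : 1 ≤ R := le_trans h1 h2
  have hR : PalAt w c R := by
    have hne : {s | PalAt w c s}.Nonempty := by
      by_contra hne
      rw [Set.not_nonempty_iff_eq_empty] at hne
      have : R = 0 := by rw [hRdef, rho, hne]; simp
      omega
    exact Nat.sSup_mem hne (bddAbove_pal w c)
  have hc : R ≤ c := hR.1
  have hlen : c + R ≤ w.length := hR.2.1
  set A := rho w (c + r) with hAdef
  set B := rho w (c - r) with hBdef
  have hA : PalAt w (c + r) A := palAt_rho (by omega)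
  have hB : PalAt w (c - r) B := palAt_rho (by omega)
  have ha : min A (R - r) ≤ B := le_rho (reflect_left hR h1 h2 hA)
  have hb : min B (R - r) ≤ A := le_rho (reflect_right hR h1 h2 hB)
  have hG : r + min A B ≤ R := by
    by_contra hlt
    push_neg at hlt
    have hpA : PalAt w (c + r) (R + 1 - r) := palAt_mono hA (by omega)
    have hpB : PalAt w (c - r) (R + 1 - r) := palAt_mono hB (by omega)
    have := le_rho (palAt_succ hR h1 h2 hpA hpB)
    omega
  constructor
  · intro hEq; omega
  · intro hne; omega
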